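/- Let D be a Karoubian triangulated category and D_0 ⊂ D a dense strictly full triangulated subcategory with D_0 ≠ D. Then D_0 does not admit a bounded t-structure. -/

import Mathlib

/-!
STATEMENT 11: Let D be a Karoubian (idempotent complete) triangulated category and
D₀ ⊂ D a dense strictly full triangulated subcategory with D₀ ≠ D. Then D₀ does not
admit a bounded t-structure. (Since the full subcategory D₀ is not known to Mathlib
as a pretriangulated category, a bounded t-structure on D₀ is formalized below as the
evident structure `SubBoundedTStructure`, mirroring Mathlib's `TStructure` with all
data and axioms taking place inside D₀ ⊂ D.)
-/

open CategoryTheory Limits Pretriangulated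

universe v u

variable (C : Type u) [Category.{v} C] [Preadditive C] [HasZeroObject C]
  [HasShift C ℤ] [∀ n : ℤ, (shiftFunctor C n).Additive] [Pretriangulated C]

/-- Mathlib's former `Triangulated.Subcategory` (removed upstream), restated with its
old definition. -/
structure Triangulated.Subcategory where
  P : ObjectProperty C
  zero' : ∃ (Z : C) (_ : IsZero Z), P Z
  shift (X : C) (n : ℤ) : P X → P (X⟦n⟧)
  ext₂' (T : Triangle C) (_ : T ∈ distTriang C) : P T.obj₁ → P T.obj₃ → P.isoClosure T.obj₂

/-- A bounded t-structure on a (strictly full) triangulated subcategory `S` of a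
pretriangulated category `C`. -/
structure SubBoundedTStructure (S : Triangulated.Subcategory C) where
  /-- the predicate of objects of the subcategory that are `≤ n` -/
  LE : ℤ → C → Prop
  /-- the predicate of objects of the subcategory that are `≥ n` -/
  GE : ℤ → C → Prop
  LE_sub : ∀ (n : ℤ) (X : C), LE n X → S.P X
  GE_sub : ∀ (n : ℤ) (X : C), GE n X → S.P X
  LE_iso : ∀ (n : ℤ) (X Y : C), (X ≅ Y) → LE n X → LE n Y
  GE_iso : ∀ (n : ℤ) (X Y : C), (X ≅ Y) → GE n X → GE n Y
  LE_shift : ∀ (n a n' : ℤ), a + n' = n → ∀ X : C, LE n X → LE n' (X⟦a⟧)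
  GE_shift : ∀ (n a n' : ℤ), a + n' = n → ∀ X : C, GE n X → GE n' (X⟦a⟧)
  zero : ∀ (X Y : C) (f : X ⟶ Y), LE 0 X → GE 1 Y → f = 0
  LE_zero_le : ∀ X : C, LE 0 X → LE 1 X
  GE_one_le : ∀ X : C, GE 1 X → GE 0 X
  exists_triangle_zero_one : ∀ A : C, S.P A → ∃ (X Y : C) (_ : LE 0 X) (_ : GE 1 Y)
    (f : X ⟶ A) (g : A ⟶ Y) (h : Y ⟶ X⟦(1 : ℤ)⟧), Triangle.mk f g h ∈ distTriang C
  bounded : ∀ X : C, S.P X → ∃ n : ℕ, LE n X ∧ GE (-(n : ℤ)) X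

/-!
By density some `X ⊞ Y` lies in `D₀`, and the cone of `𝟙 ⊞ 0 : Y ⊞ X ⟶ Y ⊞ X` is
`X ⊞ X⟦1⟧`; the cone of `𝟙 ⊞ 0 : X⟦m⟧ ⊞ X⟦m + 1⟧ ⟶ X⟦m⟧ ⊞ X` is `X ⊞ X⟦m + 2⟧`. Hence
`X ⊞ X⟦N⟧` lies in `D₀` for every odd `N > 0`. A bounded t-structure on `D₀` places
`X ⊞ X⟦1⟧`, hence its summand `X`, in some range `[-n, n]`. For `N > 2n` the summands `X⟦N⟧`
and `X` of `X⟦N⟧ ⊞ X` lie on opposite sides of degree `-n - 1`, so the truncation triangle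
there is the split one and `X` is isomorphic to its truncation, an object of `D₀`.
-/

namespace CategoryTheory.Limits

variable {C : Type*} [Category C] [Preadditive C] [HasBinaryBiproducts C]

noncomputable def piBoolIsoBiprod [HasProductsOfShape Bool C] (f : Bool → C) :
    ∏ᶜ f ≅ f true ⊞ f false where
  hom := biprod.lift (Pi.π f true) (Pi.π f false)
  inv := Pi.lift fun
    | true => biprod.fst
    | false => biprod.snd
  hom_inv_id := by
    apply Pi.hom_ext
    rintro (_ | _) <;> simp
  inv_hom_id := by
    apply biprod.hom_ext <;> simp

end CategoryTheory.Limits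

namespace CategoryTheory.Pretriangulated

variable {C}

lemma distinguished_mk_comp_iso {A : C} (T : Triangle C) (hT : T ∈ distTriang C)
    (e : T.obj₂ ≅ A) : Triangle.mk (T.mor₁ ≫ e.hom) (e.inv ≫ T.mor₂) T.mor₃ ∈ distTriang C :=
  isomorphic_distinguished _ hT _
    (Triangle.isoMk _ _ (Iso.refl T.obj₁) e.symm (Iso.refl T.obj₃)
      (by change (T.mor₁ ≫ e.hom) ≫ e.inv = 𝟙 _ ≫ T.mor₁; simp)
      (by change (e.inv ≫ T.mor₂) ≫ 𝟙 _ = e.inv ≫ T.mor₂; simp)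
      (by change T.mor₃ ≫ (𝟙 T.obj₁)⟦1⟧' = 𝟙 _ ≫ T.mor₃; simp))

/-- The triangle is isomorphic to the split triangle `Y ⟶ Y ⊞ X ⟶ X ⟶ Y⟦1⟧`: the lift
`q : Y ⟶ P` of `biprod.inl` through `f` has inverse `f ≫ biprod.fst`, and the vanishing of
`P ⟶ Q⟦-1⟧` is what makes `f` cancellable on the right. -/
lemma isIso_inr_comp_of_distinguished {Y X P Q : C} (f : P ⟶ Y ⊞ X) (g : Y ⊞ X ⟶ Q)
    (h : Q ⟶ P⟦(1 : ℤ)⟧) (hT : Triangle.mk f g h ∈ distTriang C) (hf : f ≫ biprod.snd = 0)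
    (hg : biprod.inl ≫ g = 0) (hPQ : ∀ u : P ⟶ Q⟦(-1 : ℤ)⟧, u = 0) :
    IsIso (biprod.inr ≫ g) := by
  obtain ⟨q, hq⟩ : ∃ q : Y ⟶ P, biprod.inl = q ≫ f := Triangle.coyoneda_exact₂ _ hT _ hg
  have cancel_f (u : P ⟶ P) (hu : u ≫ f = 0) : u = 0 := by
    obtain ⟨w, hw⟩ := Triangle.coyoneda_exact₂ _ (inv_rot_of_distTriang _ hT) u hu
    rw [hw, show w = 0 from hPQ w]
    exact zero_comp
  have : IsIso q := by
    refine ⟨f ≫ biprod.fst, by simp [← reassoc_of% hq], ?_⟩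
    rw [← sub_eq_zero]
    apply cancel_f
    have total : biprod.fst ≫ biprod.inl = 𝟙 (Y ⊞ X) - biprod.snd ≫ biprod.inr :=
      eq_sub_of_add_eq biprod.total
    simp [← hq, total, reassoc_of% hf]
  let φ := completeDistinguishedTriangleMorphism (binaryBiproductTriangle Y X) (Triangle.mk f g h)
    (binaryBiproductTriangle_distinguished Y X) hT q (𝟙 (Y ⊞ X)) ((Category.comp_id _).trans hq)
  have : IsIso φ.hom₃ := isIso₃_of_isIso₁₂ φ (binaryBiproductTriangle_distinguished Y X) hT
    (inferInstanceAs (IsIso q)) (inferInstanceAs (IsIso (𝟙 (Y ⊞ X))))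
  have hφ : biprod.inr ≫ g = φ.hom₃ := by
    have comm₂ : biprod.snd ≫ φ.hom₃ = 𝟙 (Y ⊞ X) ≫ g := φ.comm₂
    have := (biprod.inr ≫= comm₂).symm
    simp only [biprod.inr_snd_assoc, Category.id_comp] at this
    exact this
  exact hφ ▸ this

end CategoryTheory.Pretriangulated

namespace Triangulated.Subcategory

variable {C} (S : Triangulated.Subcategory C) [S.P.IsClosedUnderIsomorphisms]

lemma prop_obj₃ (T : Triangle C) (hT : T ∈ distTriang C) (h₁ : S.P T.obj₁)
    (h₂ : S.P T.obj₂) : S.P T.obj₃ :=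
  (S.P.isoClosure_le_iff S.P).2 le_rfl _
    (S.ext₂' T.rotate (rot_of_distTriang _ hT) h₂ (S.shift _ 1 h₁))

lemma prop_biprod_obj₃ (T₁ T₂ : Triangle C) (hT₁ : T₁ ∈ distTriang C)
    (hT₂ : T₂ ∈ distTriang C) (h₁ : S.P (T₁.obj₁ ⊞ T₂.obj₁)) (h₂ : S.P (T₁.obj₂ ⊞ T₂.obj₂)) :
    S.P (T₁.obj₃ ⊞ T₂.obj₃) := by
  let T (b : Bool) : Triangle C := cond b T₁ T₂
  have hT : productTriangle T ∈ distTriang C :=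
    productTriangle_distinguished T (by rintro (_ | _) <;> assumption)
  refine S.P.prop_of_iso (piBoolIsoBiprod _) (S.prop_obj₃ _ hT ?_ ?_)
  · exact S.P.prop_of_iso (piBoolIsoBiprod fun b => (T b).obj₁).symm h₁
  · exact S.P.prop_of_iso (piBoolIsoBiprod fun b => (T b).obj₂).symm h₂

/-- The cone of `𝟙 U ⊞ 0 : U ⊞ R ⟶ U ⊞ Z` is `Z ⊞ R⟦1⟧`. -/
lemma prop_biprod_shift_of_prop_biprod {U R Z : C} (hR : S.P (U ⊞ R)) (hZ : S.P (U ⊞ Z)) :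
    S.P (Z ⊞ R⟦(1 : ℤ)⟧) := by
  have := S.prop_biprod_obj₃ (contractibleTriangle U)
    (binaryBiproductTriangle Z (R⟦(1 : ℤ)⟧)).invRotate (contractible_distinguished U)
    (inv_rot_of_distTriang _ (binaryBiproductTriangle_distinguished _ _))
    (S.P.prop_of_iso (biprod.mapIso (Iso.refl U) (shiftShiftNeg R (1 : ℤ)).symm) hR) hZ
  exact S.P.prop_of_iso (isoZeroBiprod (isZero_zero C)).symm this

variable {S}

lemma prop_biprod_shift_one (hS : ∀ X : C, ∃ Y : C, S.P (X ⊞ Y)) (X : C) :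
    S.P (X ⊞ X⟦(1 : ℤ)⟧) := by
  obtain ⟨Y, hY⟩ := hS X
  have hY' := S.P.prop_of_iso (biprod.braiding X Y) hY
  exact S.prop_biprod_shift_of_prop_biprod hY' hY'

lemma prop_biprod_shift_add_two (hS : ∀ X : C, S.P (X ⊞ X⟦(1 : ℤ)⟧)) {X : C} {m : ℤ}
    (hm : S.P (X ⊞ X⟦m⟧)) : S.P (X ⊞ X⟦m + 2⟧) := by
  have hR : S.P (X⟦m⟧ ⊞ X⟦m + 1⟧) :=
    S.P.prop_of_iso (biprod.mapIso (Iso.refl _) ((shiftFunctorAdd' C m 1 _ rfl).app X).symm)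
      (hS (X⟦m⟧))
  have hZ : S.P (X⟦m⟧ ⊞ X) := S.P.prop_of_iso (biprod.braiding _ _) hm
  exact S.P.prop_of_iso
    (biprod.mapIso (Iso.refl X) ((shiftFunctorAdd' C (m + 1) 1 _ (by ring)).app X).symm)
    (S.prop_biprod_shift_of_prop_biprod hR hZ)

lemma prop_biprod_shift_two_mul_add_one (hS : ∀ X : C, S.P (X ⊞ X⟦(1 : ℤ)⟧)) (X : C)
    (k : ℕ) : S.P (X ⊞ X⟦2 * (k : ℤ) + 1⟧) := by
  induction k with
  | zero => simpa using hS X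
  | succ k ih =>
    rw [show 2 * ((k + 1 : ℕ) : ℤ) + 1 = 2 * k + 1 + 2 by push_cast; ring]
    exact prop_biprod_shift_add_two hS ih

end Triangulated.Subcategory

namespace SubBoundedTStructure

variable {C} {S : Triangulated.Subcategory C} (t : SubBoundedTStructure C S)

lemma GE_of_le {m n : ℤ} (hmn : m ≤ n) {X : C} (hX : t.GE n X) : t.GE m X := by
  induction m, hmn using Int.leInductionDown with
  | base => exact hX
  | pred m _ ih =>
    have h₀ := t.GE_one_le _ (t.GE_shift m (m - 1) 1 (by ring) X ih)
    exact t.GE_iso _ _ _ (shiftShiftNeg X (m - 1)) (t.GE_shift 0 (-(m - 1)) (m - 1) (by ring) _ h₀)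

lemma eq_zero_of_LE_of_GE {X Y : C} (f : X ⟶ Y) {a b : ℤ} (hab : a < b) (hX : t.LE a X)
    (hY : t.GE b Y) : f = 0 := by
  have hf : f⟦a⟧' = 0 := t.zero _ _ _ (t.LE_shift a a 0 (by ring) X hX)
    (t.GE_of_le (show 1 ≤ b - a by omega) (t.GE_shift b a (b - a) (by ring) Y hY))
  exact (shiftFunctor C a).map_injective (by rw [hf, Functor.map_zero])

lemma eq_zero_of_LE_of_retract_GE {X Y B : C} (r : Retract Y B) (f : X ⟶ Y) {a b : ℤ}
    (hab : a < b) (hX : t.LE a X) (hB : t.GE b B) : f = 0 := by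
  rw [← Category.comp_id f, ← r.retract, ← Category.assoc,
    t.eq_zero_of_LE_of_GE (f ≫ r.i) hab hX hB, zero_comp]

lemma eq_zero_of_retract_LE_of_GE {X Y B : C} (r : Retract X B) (f : X ⟶ Y) {a b : ℤ}
    (hab : a < b) (hB : t.LE a B) (hY : t.GE b Y) : f = 0 := by
  rw [← Category.id_comp f, ← r.retract, Category.assoc,
    t.eq_zero_of_LE_of_GE (r.r ≫ f) hab hB hY, comp_zero]

lemma exists_triangle (k : ℤ) {A : C} (hA : S.P A) :
    ∃ (X Y : C) (_ : t.LE k X) (_ : t.GE (k + 1) Y) (f : X ⟶ A) (g : A ⟶ Y)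
      (h : Y ⟶ X⟦(1 : ℤ)⟧), Triangle.mk f g h ∈ distTriang C := by
  obtain ⟨X, Y, hX, hY, f, g, h, hT⟩ := t.exists_triangle_zero_one _ (S.shift A k hA)
  exact ⟨_, _, t.LE_shift 0 (-k) k (by ring) X hX, t.GE_shift 1 (-k) (k + 1) (by ring) Y hY,
    _, _, _, distinguished_mk_comp_iso _ (Triangle.shift_distinguished _ hT (-k))
      (shiftShiftNeg A k)⟩

lemma prop_of_retract (t : SubBoundedTStructure C S) [S.P.IsClosedUnderIsomorphisms] {X B : C}
    (r : Retract X B) (hB : S.P B) (hX : ∀ n : ℤ, ∃ N, n < N ∧ S.P (X ⊞ X⟦N⟧)) : S.P X := by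
  obtain ⟨n, hBle, hBge⟩ := t.bounded B hB
  obtain ⟨N, hN, hXN⟩ := hX (2 * n)
  obtain ⟨P, Q, hP, hQ, f, g, h, hT⟩ :=
    t.exists_triangle (-n - 1) (S.P.prop_of_iso (biprod.braiding _ _) hXN)
  have hf : f ≫ biprod.snd = 0 := t.eq_zero_of_LE_of_retract_GE r _ (by omega) hP hBge
  have hg : biprod.inl ≫ g = 0 := t.eq_zero_of_retract_LE_of_GE (r.map (shiftFunctor C N)) _
    (by omega) (t.LE_shift n N (n - N) (by ring) B hBle) hQ
  have hPQ (u : P ⟶ Q⟦(-1 : ℤ)⟧) : u = 0 := t.eq_zero_of_LE_of_GE u (by omega) hP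
    (t.GE_shift _ (-1) (-n + 1) (by ring) Q hQ)
  have := isIso_inr_comp_of_distinguished f g h hT hf hg hPQ
  exact S.P.prop_of_iso (asIso (biprod.inr ≫ g)).symm (t.GE_sub _ _ hQ)

end SubBoundedTStructure

theorem stmt11
    (D₀ : Triangulated.Subcategory C) [ObjectProperty.IsClosedUnderIsomorphisms D₀.P]
    (hdense : ∀ X : C, ∃ Y : C, D₀.P (X ⊞ Y))
    (hne : ∃ X : C, ¬ D₀.P X) :
    IsEmpty (SubBoundedTStructure C D₀) := by
  refine ⟨fun t => ?_⟩
  obtain ⟨X, hX⟩ := hne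
  have hshift := Triangulated.Subcategory.prop_biprod_shift_one hdense
  refine hX (t.prop_of_retract ⟨biprod.inl, biprod.fst, by simp⟩ (hshift X) fun n => ?_)
  exact ⟨2 * n.toNat + 1, by omega,
    Triangulated.Subcategory.prop_biprod_shift_two_mul_add_one hshift X n.toNat⟩
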